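/- Let W = (W₁, …, W_q) be a vector of mutually independent real random variables with E[W_i] = E[W_i³] = 0, E[W_i²] = 1 and E[W_i⁴] < ∞ for each i, let μ ∈ ℝ^d, σ ∈ ℝ^{d×q}, (t, x) ∈ ℝ × ℝ^d, and set ξ_h := μ h + √h σ W. Let g : ℝ × ℝ^d → ℝ be four times continuously differentiable with all partial derivatives of order at most 4 bounded. Define the random finite difference operator D_h g(t, x) := (g(t + h, x + ξ_h) − g(t, x)) / h. Then E[D_h g(t, x)] converges to D₀ g(t, x) := ∂_t g(t, x) + μᵀ ∇_x g(t, x) + ½ Tr(σ σᵀ ∇²_x g(t, x)) as h → 0⁺, with the error bounded by C h for some constant C on a right-neighborhood of 0; i.e., E[D_h g(t, x)] = D₀ g(t, x) + O(h). -/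

import Mathlib

/-!
Write `p = (t, x)`, `u = (1, μ)` and `cᵢ = (0, σ·ᵢ)`, so that the random point is
`p + h u + √h s` with `s = ∑ᵢ Wᵢ cᵢ`. Expand `g` to third order around `y = p + h u` in the
direction `√h s`. In expectation the first- and third-order terms vanish (odd moments of the
independent `Wᵢ` vanish), the second-order term becomes `(h/2) ∑ᵢ D²g(y)(cᵢ, cᵢ)`, and the
fourth-order remainder is `O(h² E‖s‖⁴)`. Moving the base point from `y` back to `p` costs
`O(h²)` in the drift term (bounded `D²g`) and in the diffusion term (bounded `D³g`), so after
division by `h` the error is `O(h)`.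
-/

open MeasureTheory ProbabilityTheory
open scoped ENNReal

section

variable {E F : Type*} [NormedAddCommGroup E] [NormedSpace ℝ E] [NormedAddCommGroup F]
  [NormedSpace ℝ F]

open Nat in
noncomputable def taylorSum (f : E → F) (x : E) (n : ℕ) (v : E) : F :=
  ∑ k ∈ Finset.range (n + 1), (k ! : ℝ)⁻¹ • iteratedFDeriv ℝ k f x (fun _ => v)

theorem iteratedDeriv_comp_add_smul {f : E → F} {n : WithTop ℕ∞} (hf : ContDiff ℝ n f)
    (x v : E) {k : ℕ} (hk : k ≤ n) (θ : ℝ) :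
    iteratedDeriv k (fun θ : ℝ => f (x + θ • v)) θ =
      iteratedFDeriv ℝ k f (x + θ • v) (fun _ => v) := by
  have hfx : ContDiff ℝ n (fun z => f (x + z)) := hf.comp (contDiff_const.add contDiff_id)
  have := (ContinuousLinearMap.toSpanSingleton ℝ v).iteratedFDeriv_comp_right hfx θ hk
  simp only [Function.comp_def, ContinuousLinearMap.toSpanSingleton_apply] at this
  rw [iteratedDeriv_eq_iteratedFDeriv, this, iteratedFDeriv_comp_add_left]
  simp

open Set Nat in
theorem norm_sub_taylorSum_le {f : E → F} {n : ℕ} (hf : ContDiff ℝ (n + 1) f) {K : ℝ}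
    (hK : ∀ y, ‖iteratedFDeriv ℝ (n + 1) f y‖ ≤ K) (x v : E) :
    ‖f (x + v) - taylorSum f x n v‖ ≤ K * ‖v‖ ^ (n + 1) / n ! := by
  set line : ℝ → F := fun θ => f (x + θ • v)
  have hline : ContDiff ℝ (n + 1) line :=
    hf.comp (contDiff_const.add (contDiff_id.smul contDiff_const))
  have hderiv : ∀ k ≤ n + 1, ∀ θ ∈ Icc (0 : ℝ) 1,
      iteratedDerivWithin k line (Icc 0 1) θ = iteratedFDeriv ℝ k f (x + θ • v) (fun _ => v) := by
    intro k hk θ hθ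
    rw [iteratedDerivWithin_eq_iteratedDeriv (uniqueDiffOn_Icc zero_lt_one)
      (hline.contDiffAt.of_le (by exact_mod_cast hk)) hθ,
      iteratedDeriv_comp_add_smul hf x v (by exact_mod_cast hk)]
  have := taylor_mean_remainder_bound (f := line) (x := 1) zero_le_one hline.contDiffOn
    (right_mem_Icc.2 zero_le_one) (C := K * ‖v‖ ^ (n + 1)) fun y hy => by
      rw [hderiv _ le_rfl y hy]
      refine ((iteratedFDeriv ℝ (n + 1) f _).le_opNorm _).trans ?_
      simp only [Finset.prod_const, Finset.card_univ, Fintype.card_fin]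
      gcongr
      exact hK _
  simp only [taylor_within_apply, sub_zero, one_pow, mul_one] at this
  rw [taylorSum]
  convert this using 4
  · rw [one_smul]
  · rename_i k hk
    rw [hderiv k (by simpa [Nat.lt_succ_iff] using (Finset.mem_range.1 hk).le) 0
      (left_mem_Icc.2 zero_le_one), zero_smul, add_zero]

theorem norm_sub_sub_fderiv_le {f : E → F} (hf : ContDiff ℝ 2 f) {K : ℝ}
    (hK : ∀ y, ‖iteratedFDeriv ℝ 2 f y‖ ≤ K) (x v : E) :
    ‖f (x + v) - f x - fderiv ℝ f x v‖ ≤ K * ‖v‖ ^ 2 := by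
  simpa [taylorSum, Finset.sum_range_succ, sub_sub] using norm_sub_taylorSum_le (n := 1) hf hK x v

theorem norm_iteratedFDeriv_add_sub_le {f : E → F} {k : ℕ} (hf : ContDiff ℝ (k + 1) f) {K : ℝ}
    (hK : ∀ y, ‖iteratedFDeriv ℝ (k + 1) f y‖ ≤ K) (x v : E) :
    ‖iteratedFDeriv ℝ k f (x + v) - iteratedFDeriv ℝ k f x‖ ≤ K * ‖v‖ := by
  have := norm_sub_taylorSum_le (f := iteratedFDeriv ℝ k f) (n := 0)
    (hf.iteratedFDeriv_right (by simp [add_comm])) (K := K)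
    (fun y => by rw [zero_add, norm_iteratedFDeriv_one, norm_fderiv_iteratedFDeriv]; exact hK y) x v
  simpa [taylorSum] using this

theorem abs_sum_iteratedFDeriv_two_add_sub_le {ι : Type*} [Fintype ι] {g : E → ℝ}
    (hg : ContDiff ℝ 3 g) {K : ℝ} (hK : ∀ y, ‖iteratedFDeriv ℝ 3 g y‖ ≤ K) (x v : E) (c : ι → E) :
    |∑ i, (iteratedFDeriv ℝ 2 g (x + v) (fun _ => c i) - iteratedFDeriv ℝ 2 g x (fun _ => c i))|
      ≤ K * ‖v‖ * ∑ i, ‖c i‖ ^ 2 := by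
  have hlip := norm_iteratedFDeriv_add_sub_le (k := 2) hg hK x v
  rw [Finset.mul_sum]
  refine (Finset.abs_sum_le_sum_abs _ _).trans (Finset.sum_le_sum fun i _ => ?_)
  rw [← sub_apply, ← Real.norm_eq_abs]
  refine ((iteratedFDeriv ℝ 2 g (x + v) - iteratedFDeriv ℝ 2 g x).le_opNorm _).trans ?_
  simp only [Finset.prod_const, Finset.card_univ, Fintype.card_fin]
  gcongr

theorem ContinuousMultilinearMap.apply_const_sum_smul {ι : Type*} [Fintype ι] {k : ℕ}
    (M : ContinuousMultilinearMap ℝ (fun _ : Fin k => E) ℝ) (a : ι → ℝ) (c : ι → E) :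
    M (fun _ => ∑ i, a i • c i) = ∑ r : Fin k → ι, (∏ j, a (r j)) * M (fun j => c (r j)) := by
  classical
  simp [M.map_sum, M.map_smul_univ]

/-- `D₀ g(p) = Dg(p) u + ½ Tr(C D²g(p))` for the drift `u` and the diffusion matrix
`C = ∑ᵢ cᵢ cᵢᵀ`. -/
noncomputable def diffusionGenerator {ι : Type*} [Fintype ι] (g : E → ℝ) (p u : E) (c : ι → E) :
    ℝ :=
  fderiv ℝ g p u + 1 / 2 * ∑ i, fderiv ℝ (fderiv ℝ g) p (c i) (c i)

end

section Noise

variable {Ω ι : Type*} [MeasureSpace Ω]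

structure IsStandardNoise (W : ι → Ω → ℝ) : Prop where
  measurable : ∀ i, Measurable (W i)
  iIndepFun : iIndepFun W volume
  integral_eq_zero : ∀ i, ∫ ω, W i ω = 0
  integral_sq : ∀ i, ∫ ω, W i ω ^ 2 = 1
  integral_cube : ∀ i, ∫ ω, W i ω ^ 3 = 0
  integrable_pow_four : ∀ i, Integrable (fun ω => W i ω ^ 4)

namespace IsStandardNoise

variable {W : ι → Ω → ℝ}

theorem integral_mul [DecidableEq ι] (hW : IsStandardNoise W) (i j : ι) :
    ∫ ω, W i ω * W j ω = if i = j then 1 else 0 := by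
  split_ifs with hij
  · subst hij
    simpa [sq] using hW.integral_sq i
  · simpa [hW.integral_eq_zero] using
      (hW.iIndepFun.indepFun hij).integral_mul_eq_mul_integral
        (hW.measurable i).aestronglyMeasurable (hW.measurable j).aestronglyMeasurable

theorem integral_mul_mul (hW : IsStandardNoise W) (i j k : ι) :
    ∫ ω, W i ω * W j ω * W k ω = 0 := by
  have hfactor : ∀ a b c, a ≠ c → b ≠ c → ∫ ω, W a ω * W b ω * W c ω = 0 := by
    intro a b c hac hbc
    have hindep := (hW.iIndepFun.indepFun_prodMk hW.measurable a b c hac hbc).comp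
      (measurable_fst.mul measurable_snd) measurable_id
    simpa [Function.comp_def, hW.integral_eq_zero] using
      hindep.integral_mul_eq_mul_integral
        ((hW.measurable a).mul (hW.measurable b)).aestronglyMeasurable
        (hW.measurable c).aestronglyMeasurable
  by_cases hk : i ≠ k ∧ j ≠ k
  · exact hfactor i j k hk.1 hk.2
  by_cases hi : j ≠ i ∧ k ≠ i
  · rw [← hfactor j k i hi.1 hi.2]
    congr 1 with ω
    ring
  by_cases hj : i ≠ j ∧ k ≠ j
  · rw [← hfactor i k j hj.1 hj.2]
    congr 1 with ω
    ring
  obtain ⟨rfl, rfl⟩ : i = j ∧ i = k := by grind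
  simpa [pow_three, mul_assoc] using hW.integral_cube i

variable [IsProbabilityMeasure (volume : Measure Ω)]

theorem memLp (hW : IsStandardNoise W) (i : ι) {p : ℝ≥0∞} (hp : p ≤ 4) : MemLp (W i) p := by
  refine MemLp.mono_exponent ?_ hp
  rw [← integrable_norm_rpow_iff (hW.measurable i).aestronglyMeasurable (by norm_num)
    (by norm_num)]
  simpa [Real.norm_eq_abs, Even.pow_abs ⟨2, rfl⟩] using hW.integrable_pow_four i

theorem integrable_prod (hW : IsStandardNoise W) {k : ℕ} (hk : k ≤ 4) (r : Fin k → ι) :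
    Integrable (fun ω => ∏ j, W (r j) ω) := by
  rcases Nat.eq_zero_or_pos k with rfl | hk0
  · simp
  have := MemLp.prod' (s := Finset.univ) (p := fun _ => (k : ℝ≥0∞))
    fun j _ => hW.memLp (r j) (by exact_mod_cast hk)
  rw [← memLp_one_iff_integrable]
  convert this
  simp [ENNReal.mul_inv_cancel (Nat.cast_ne_zero.2 hk0.ne') (ENNReal.natCast_ne_top k)]

variable {E : Type*} [NormedAddCommGroup E] [NormedSpace ℝ E] [Fintype ι]

theorem integrable_multilinear (hW : IsStandardNoise W) {k : ℕ} (hk : k ≤ 4)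
    (M : ContinuousMultilinearMap ℝ (fun _ : Fin k => E) ℝ) (c : ι → E) :
    Integrable (fun ω => M (fun _ => ∑ i, W i ω • c i)) := by
  simp only [ContinuousMultilinearMap.apply_const_sum_smul]
  exact integrable_finsetSum _ fun r _ => (hW.integrable_prod hk r).mul_const _

theorem integral_multilinear (hW : IsStandardNoise W) {k : ℕ} (hk : k ≤ 4)
    (M : ContinuousMultilinearMap ℝ (fun _ : Fin k => E) ℝ) (c : ι → E) :
    ∫ ω, M (fun _ => ∑ i, W i ω • c i) =
      ∑ r : Fin k → ι, (∫ ω, ∏ j, W (r j) ω) * M (fun j => c (r j)) := by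
  simp only [ContinuousMultilinearMap.apply_const_sum_smul]
  rw [integral_finsetSum _ fun r _ => (hW.integrable_prod hk r).mul_const _]
  simp only [integral_mul_const]

theorem integral_multilinear_one (hW : IsStandardNoise W)
    (M : ContinuousMultilinearMap ℝ (fun _ : Fin 1 => E) ℝ) (c : ι → E) :
    ∫ ω, M (fun _ => ∑ i, W i ω • c i) = 0 := by
  simp [hW.integral_multilinear (M := M) (by norm_num), hW.integral_eq_zero]

theorem integral_multilinear_two (hW : IsStandardNoise W)
    (M : ContinuousMultilinearMap ℝ (fun _ : Fin 2 => E) ℝ) (c : ι → E) :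
    ∫ ω, M (fun _ => ∑ i, W i ω • c i) = ∑ i, M (fun _ => c i) := by
  classical
  rw [hW.integral_multilinear (by norm_num), ← (finTwoArrowEquiv ι).symm.sum_comp,
    Fintype.sum_prod_type]
  simp only [finTwoArrowEquiv_symm_apply, Fin.prod_univ_two, Matrix.cons_val_zero,
    Matrix.cons_val_one, hW.integral_mul, ite_mul, one_mul, zero_mul, Finset.sum_ite_eq,
    Finset.mem_univ, if_true]
  refine Finset.sum_congr rfl fun i _ => congrArg M (funext fun j => ?_)
  fin_cases j <;> rfl

theorem integral_multilinear_three (hW : IsStandardNoise W)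
    (M : ContinuousMultilinearMap ℝ (fun _ : Fin 3 => E) ℝ) (c : ι → E) :
    ∫ ω, M (fun _ => ∑ i, W i ω • c i) = 0 := by
  simp [hW.integral_multilinear (M := M) (by norm_num), Fin.prod_univ_three, hW.integral_mul_mul]

theorem memLp_sum_smul (hW : IsStandardNoise W) (c : ι → E) :
    MemLp (fun ω => ∑ i, W i ω • c i) 4 :=
  memLp_finsetSum _ fun i _ => (memLp_top_const (c i)).smul (hW.memLp i le_rfl)

theorem integrable_taylorSum (hW : IsStandardNoise W) (f : E → ℝ) (y : E) {n : ℕ} (hn : n ≤ 3)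
    (c : ι → E) : Integrable (fun ω => taylorSum f y n (∑ i, W i ω • c i)) := by
  simp only [taylorSum, smul_eq_mul]
  exact integrable_finsetSum _ fun k hk =>
    (hW.integrable_multilinear (k := k) (by simp at hk; omega) _ c).const_mul _

theorem integral_taylorSum_three (hW : IsStandardNoise W) (f : E → ℝ) (y : E) (c : ι → E) :
    ∫ ω, taylorSum f y 3 (∑ i, W i ω • c i) =
      f y + 1 / 2 * ∑ i, iteratedFDeriv ℝ 2 f y (fun _ => c i) := by
  simp only [taylorSum, smul_eq_mul]
  rw [integral_finsetSum _ fun k hk =>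
    (hW.integrable_multilinear (k := k) (by simp at hk; omega) _ c).const_mul _]
  simp only [Finset.sum_range_succ, Finset.sum_range_zero, zero_add, integral_const_mul,
    hW.integral_multilinear_one, hW.integral_multilinear_two, hW.integral_multilinear_three]
  simp [Nat.factorial]

theorem integrable_sub_taylorSum (hW : IsStandardNoise W) {f : E → ℝ} (hf : ContDiff ℝ 4 f)
    {K : ℝ} (hK : ∀ y, ‖iteratedFDeriv ℝ 4 f y‖ ≤ K) (y : E) (c : ι → E) :
    Integrable (fun ω => f (y + ∑ i, W i ω • c i) - taylorSum f y 3 (∑ i, W i ω • c i)) := by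
  have hs := hW.memLp_sum_smul c
  refine Integrable.mono' ((hs.integrable_norm_pow (by norm_num)).const_mul (K / 6)) ?_
    (Filter.Eventually.of_forall fun ω => ?_)
  · have : Continuous fun v => f (y + v) - taylorSum f y 3 v := by
      unfold taylorSum
      fun_prop
    exact this.comp_aestronglyMeasurable hs.aestronglyMeasurable
  · have := norm_sub_taylorSum_le hf hK y (∑ i, W i ω • c i)
    simp only [Nat.factorial] at this
    linarith

theorem integrable_comp_add (hW : IsStandardNoise W) {f : E → ℝ} (hf : ContDiff ℝ 4 f)
    {K : ℝ} (hK : ∀ y, ‖iteratedFDeriv ℝ 4 f y‖ ≤ K) (y : E) (c : ι → E) :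
    Integrable (fun ω => f (y + ∑ i, W i ω • c i)) := by
  refine ((hW.integrable_sub_taylorSum hf hK y c).add
    (hW.integrable_taylorSum f y le_rfl c)).congr (Filter.Eventually.of_forall fun ω => ?_)
  simp

theorem abs_integral_comp_add_sub_le (hW : IsStandardNoise W) {f : E → ℝ} (hf : ContDiff ℝ 4 f)
    {K : ℝ} (hK : ∀ y, ‖iteratedFDeriv ℝ 4 f y‖ ≤ K) (y : E) (c : ι → E) :
    |(∫ ω, f (y + ∑ i, W i ω • c i)) -
        (f y + 1 / 2 * ∑ i, iteratedFDeriv ℝ 2 f y (fun _ => c i))|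
      ≤ K / 6 * ∫ ω, ‖∑ i, W i ω • c i‖ ^ 4 := by
  rw [← hW.integral_taylorSum_three, ← integral_sub (hW.integrable_comp_add hf hK y c)
    (hW.integrable_taylorSum f y le_rfl c), ← integral_const_mul]
  refine (abs_integral_le_integral_abs).trans (integral_mono_of_nonneg
    (Filter.Eventually.of_forall fun _ => abs_nonneg _) ?_
    (Filter.Eventually.of_forall fun ω => ?_))
  · exact ((hW.memLp_sum_smul c).integrable_norm_pow (by norm_num)).const_mul _
  · have := norm_sub_taylorSum_le hf hK y (∑ i, W i ω • c i)
    simp only [Nat.factorial, Real.norm_eq_abs] at this ⊢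
    linarith

theorem abs_integral_comp_add_smul_sub_le (hW : IsStandardNoise W) {f : E → ℝ}
    (hf : ContDiff ℝ 4 f) {K : ℝ} (hK : ∀ y, ‖iteratedFDeriv ℝ 4 f y‖ ≤ K) (y : E) (a : ℝ)
    (c : ι → E) :
    |(∫ ω, f (y + a • ∑ i, W i ω • c i)) -
        (f y + a ^ 2 / 2 * ∑ i, iteratedFDeriv ℝ 2 f y (fun _ => c i))|
      ≤ K / 6 * a ^ 4 * ∫ ω, ‖∑ i, W i ω • c i‖ ^ 4 := by
  have hscale : ∀ ω, a • ∑ i, W i ω • c i = ∑ i, W i ω • (a • c i) := fun ω => by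
    simp only [Finset.smul_sum, smul_comm a]
  have hsecond : ∀ i, iteratedFDeriv ℝ 2 f y (fun _ => a • c i) =
      a ^ 2 * iteratedFDeriv ℝ 2 f y (fun _ => c i) := fun i => by
    simp [(iteratedFDeriv ℝ 2 f y).map_smul_univ (fun _ => a) (fun _ => c i)]
  have hfourth : ∫ ω, ‖∑ i, W i ω • (a • c i)‖ ^ 4 = a ^ 4 * ∫ ω, ‖∑ i, W i ω • c i‖ ^ 4 := by
    simp only [← hscale, norm_smul, mul_pow, integral_const_mul, Real.norm_eq_abs, pow_abs,
      abs_of_nonneg (Even.pow_nonneg ⟨2, rfl⟩ a)]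
  have hnoise := hW.abs_integral_comp_add_sub_le hf hK y (fun i => a • c i)
  rw [hfourth] at hnoise
  simp only [hsecond, ← Finset.mul_sum, ← hscale] at hnoise
  rw [mul_assoc]
  convert hnoise using 3
  ring

theorem abs_integral_sub_diffusionGenerator_le (hW : IsStandardNoise W) {g : E → ℝ}
    (hg : ContDiff ℝ 4 g) {K₂ K₃ K₄ : ℝ} (hK₂ : ∀ y, ‖iteratedFDeriv ℝ 2 g y‖ ≤ K₂)
    (hK₃ : ∀ y, ‖iteratedFDeriv ℝ 3 g y‖ ≤ K₃) (hK₄ : ∀ y, ‖iteratedFDeriv ℝ 4 g y‖ ≤ K₄)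
    (p u : E) (c : ι → E) {h : ℝ} (hh : 0 ≤ h) :
    |(∫ ω, (g (p + h • u + √h • ∑ i, W i ω • c i) - g p)) - h * diffusionGenerator g p u c|
      ≤ (K₂ * ‖u‖ ^ 2 + K₃ * ‖u‖ / 2 * ∑ i, ‖c i‖ ^ 2
          + K₄ / 6 * ∫ ω, ‖∑ i, W i ω • c i‖ ^ 4) * h ^ 2 := by
  set y := p + h • u
  have hsqrt : √h ^ 2 = h := Real.sq_sqrt hh
  have hnoise := hW.abs_integral_comp_add_smul_sub_le hg hK₄ y √h c
  rw [hsqrt, show √h ^ 4 = (√h ^ 2) ^ 2 by ring, hsqrt] at hnoise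
  have hdrift := norm_sub_sub_fderiv_le (hg.of_le (by norm_num)) hK₂ p (h • u)
  rw [map_smul, smul_eq_mul, norm_smul, Real.norm_of_nonneg hh, Real.norm_eq_abs] at hdrift
  have hcurv := abs_sum_iteratedFDeriv_two_add_sub_le (hg.of_le (by norm_num)) hK₃ p (h • u) c
  rw [norm_smul, Real.norm_of_nonneg hh] at hcurv
  have hint : Integrable (fun ω => g (y + √h • ∑ i, W i ω • c i)) := by
    simpa only [Finset.smul_sum, smul_comm √h] using
      hW.integrable_comp_add hg hK₄ y (fun i => √h • c i)
  rw [integral_sub hint (integrable_const _), integral_const, probReal_univ, one_smul]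
  have hsplit : (∫ ω, g (y + √h • ∑ i, W i ω • c i)) - g p - h * diffusionGenerator g p u c =
      ((∫ ω, g (y + √h • ∑ i, W i ω • c i)) -
        (g y + h / 2 * ∑ i, iteratedFDeriv ℝ 2 g y (fun _ => c i)))
      + (g y - g p - h * fderiv ℝ g p u)
      + h / 2 * ∑ i, (iteratedFDeriv ℝ 2 g y (fun _ => c i) -
          iteratedFDeriv ℝ 2 g p (fun _ => c i)) := by
    simp only [diffusionGenerator, iteratedFDeriv_two_apply, Finset.sum_sub_distrib]
    ring
  rw [hsplit]
  refine (abs_add_three _ _ _).trans ?_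
  rw [abs_mul, abs_of_nonneg (by positivity : 0 ≤ h / 2)]
  nlinarith [mul_le_mul_of_nonneg_left hcurv (by positivity : 0 ≤ h / 2)]

end IsStandardNoise

end Noise

theorem diffusionGenerator_prod_eq {d q : ℕ} {g : ℝ × (Fin d → ℝ) → ℝ} (hg : ContDiff ℝ 2 g)
    (p : ℝ × (Fin d → ℝ)) (μ : Fin d → ℝ) (σ : Matrix (Fin d) (Fin q) ℝ) :
    fderiv ℝ g p ((1:ℝ), (0 : Fin d → ℝ)) + fderiv ℝ g p ((0:ℝ), μ)
      + (1/2) * ∑ a, ∑ b, (σ * σ.transpose) a b *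
          fderiv ℝ (fun p => fderiv ℝ g p ((0:ℝ), Pi.single b 1)) p ((0:ℝ), Pi.single a 1)
      = diffusionGenerator g p (1, μ) (fun i => (0, fun a => σ a i)) := by
  have hcol : ∀ i, ((0 : ℝ), fun a => σ a i) = ∑ a, σ a i • ((0 : ℝ), Pi.single a (1 : ℝ)) := by
    intro i
    ext <;> simp [Prod.fst_sum, Prod.snd_sum, Pi.single_apply]
  have hdiff : DifferentiableAt ℝ (fderiv ℝ g) p :=
    (hg.fderiv_right (m := 1) le_rfl).differentiable one_ne_zero p
  simp only [fderiv_clm_apply hdiff (differentiableAt_const _), fderiv_const_apply,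
    ContinuousLinearMap.comp_zero, zero_add, ContinuousLinearMap.flip_apply]
  rw [diffusionGenerator, ← map_add, Prod.mk_add_mk, add_zero, zero_add]
  congr 2
  simp only [hcol, map_sum, map_smul, sum_apply,
    smul_apply, smul_eq_mul, Matrix.mul_apply, Matrix.transpose_apply,
    Finset.sum_mul, Finset.mul_sum]
  conv_lhs => rw [Finset.sum_comm]
  conv_rhs => rw [Finset.sum_comm]
  refine Finset.sum_congr rfl fun b _ => ?_
  rw [Finset.sum_comm]
  exact Finset.sum_congr rfl fun i _ => Finset.sum_congr rfl fun a _ => by ring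

/-- With `W`, `μ`, `σ`, `(t,x)`, `ξ_h := μ h + √h σ W` and `g` as in
Statement 1, the expectation of the random finite difference operator
`D_h g(t,x) := (g(t+h, x+ξ_h) − g(t,x))/h` satisfies
`E[D_h g(t,x)] = D₀ g(t,x) + O(h)` as `h → 0⁺`, where
`D₀ g := ∂_t g + μᵀ∇_x g + ½ Tr(σσᵀ ∇²_x g)`; i.e. the error is bounded by `C h` on a
right-neighborhood of `0`. -/
theorem rdo_converges_to_generator
    {Ω : Type*} [MeasureSpace Ω] [IsProbabilityMeasure (volume : Measure Ω)]
    {d q : ℕ}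
    (W : Fin q → Ω → ℝ)
    (hWmeas : ∀ i, Measurable (W i))
    (hWindep : iIndepFun W volume)
    (hW1 : ∀ i, ∫ ω, W i ω = 0)
    (hW2 : ∀ i, ∫ ω, (W i ω) ^ 2 = 1)
    (hW3 : ∀ i, ∫ ω, (W i ω) ^ 3 = 0)
    (hW4 : ∀ i, Integrable (fun ω => (W i ω) ^ 4))
    (μ : Fin d → ℝ) (σ : Matrix (Fin d) (Fin q) ℝ) (t : ℝ) (x : Fin d → ℝ)
    (g : ℝ × (Fin d → ℝ) → ℝ) (hg : ContDiff ℝ 4 g)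
    (hgbdd : ∀ n : ℕ, n ≤ 4 → ∃ K : ℝ, ∀ p : ℝ × (Fin d → ℝ), ‖iteratedFDeriv ℝ n g p‖ ≤ K) :
    ∃ C > (0:ℝ), ∃ h₀ > (0:ℝ), ∀ h : ℝ, 0 < h → h ≤ h₀ →
      |(∫ ω, (g (t + h, x + fun a => μ a * h + Real.sqrt h * ∑ i, σ a i * W i ω)
              - g (t, x)) / h)
        - (fderiv ℝ g (t, x) ((1:ℝ), (0 : Fin d → ℝ))
            + fderiv ℝ g (t, x) ((0:ℝ), μ)
            + (1/2) * ∑ a, ∑ b, (σ * σ.transpose) a b *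
                fderiv ℝ (fun p => fderiv ℝ g p ((0:ℝ), Pi.single b 1)) (t, x)
                  ((0:ℝ), Pi.single a 1))|
        ≤ C * h := by
  have hW : IsStandardNoise W := ⟨hWmeas, hWindep, hW1, hW2, hW3, hW4⟩
  obtain ⟨K₂, hK₂⟩ := hgbdd 2 (by norm_num)
  obtain ⟨K₃, hK₃⟩ := hgbdd 3 (by norm_num)
  obtain ⟨K₄, hK₄⟩ := hgbdd 4 le_rfl
  set c : Fin q → ℝ × (Fin d → ℝ) := fun i => (0, fun a => σ a i)
  set C := K₂ * ‖((1 : ℝ), μ)‖ ^ 2 + K₃ * ‖((1 : ℝ), μ)‖ / 2 * ∑ i, ‖c i‖ ^ 2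
    + K₄ / 6 * ∫ ω, ‖∑ i, W i ω • c i‖ ^ 4
  refine ⟨max C 1, lt_max_of_lt_right one_pos, 1, one_pos, fun h hh _ => ?_⟩
  have hpoint : ∀ ω, (t + h, x + fun a => μ a * h + √h * ∑ i, σ a i * W i ω)
      = (t, x) + h • ((1 : ℝ), μ) + √h • ∑ i, W i ω • c i := fun ω => by
    ext a
    · simp [c, Prod.fst_sum]
    · simp [c, Prod.snd_sum, Finset.sum_apply, Finset.mul_sum, mul_comm, add_assoc]
  have hbound := hW.abs_integral_sub_diffusionGenerator_le hg hK₂ hK₃ hK₄ (t, x) (1, μ) c hh.le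
  rw [diffusionGenerator_prod_eq (hg.of_le (by norm_num)), integral_div]
  simp only [hpoint]
  rw [div_sub' hh.ne', abs_div, abs_of_pos hh, div_le_iff₀ hh]
  calc _ ≤ C * h ^ 2 := hbound
    _ ≤ max C 1 * h * h := by nlinarith [le_max_left C 1]
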